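/- Let T : M² → M̄² be a Lie solution of the optimal transport problem with cost c between compact surfaces with densities ρ, ρ̄. Then for any θ₀ ∈ S¹, the product map F(x, θ) = (T(x), θ + θ₀) : M² × S¹ → M̄² × S¹ is a Lie solution for the cost c̃((x,θ),(x̄,θ̄)) = c(x,x̄) + dist²_{S¹}(θ,θ̄) and densities ρ ∧ dθ, ρ̄ ∧ dθ̄: i.e., F pushes ρ ∧ dθ forward to ρ̄ ∧ dθ̄ and is the c̃-exponential of a closed 1-form. -/

import Mathlib

/-!
STATEMENT 14: If `T : M² → M̄²` is a Lie solution for the cost `c` (local model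
`ℝ²`), then for any `θ₀ ∈ S¹` the product map `F(x,θ) = (T x, θ + θ₀)` on
`M² × S¹` is a Lie solution for the cost
`c̃((x,θ),(x̄,θ̄)) = c(x,x̄) + dist_{S¹}(θ,θ̄)²` and the densities `ρ ∧ dθ`,
`ρ̄ ∧ dθ̄`: it pushes `ρ ∧ dθ` forward to `ρ̄ ∧ dθ̄` (pullback mass balance,
expressed through the Jacobian) and it is the `c̃`-exponential of a closed
1-form.  The circle `S¹` is modelled as `ℝ/2πℤ` (so `θ, θ₀` are real
representatives and `dist_{S¹}` is the distance in `AddCircle (2π)`).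
-/

noncomputable section

abbrev ee {n : ℕ} (i : Fin n) : Fin n → ℝ := Pi.single i 1

def pd {n : ℕ} (i : Fin n) (f : (Fin n → ℝ) → ℝ) (x : Fin n → ℝ) : ℝ :=
  fderiv ℝ f x (ee i)

def jacMat {n : ℕ} (T : (Fin n → ℝ) → (Fin n → ℝ)) (x : Fin n → ℝ) :
    Matrix (Fin n) (Fin n) ℝ :=
  Matrix.of fun s j => fderiv ℝ (fun y => T y s) x (ee j)

/-- Arc-length distance on the circle `ℝ/2πℤ`, in terms of real representatives. -/
def distS1 (a b : ℝ) : ℝ :=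
  dist (a : AddCircle (2 * Real.pi)) (b : AddCircle (2 * Real.pi))

/-- The standard tangent frame of the product `M² × S¹ ≅ ℝ² × ℝ`. -/
def bvec : Fin 3 → (Fin 2 → ℝ) × ℝ :=
  ![(ee 0, 0), (ee 1, 0), (0, 1)]

/-- Components of a tangent vector of `M² × S¹` in the standard frame. -/
def comp3 (v : (Fin 2 → ℝ) × ℝ) : Fin 3 → ℝ :=
  ![v.1 0, v.1 1, v.2]

/-- Jacobian of a self-map of `M² × S¹` in the standard frame. -/
def jac3 (F : (Fin 2 → ℝ) × ℝ → (Fin 2 → ℝ) × ℝ) (p : (Fin 2 → ℝ) × ℝ) :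
    Matrix (Fin 3) (Fin 3) ℝ :=
  Matrix.of fun i j => comp3 (fderiv ℝ F p (bvec j)) i

/-- Directional derivative along the `i`-th frame vector on `M² × S¹`. -/
def pd3 (i : Fin 3) (f : (Fin 2 → ℝ) × ℝ → ℝ) (p : (Fin 2 → ℝ) × ℝ) : ℝ :=
  fderiv ℝ f p (bvec i)

lemma distS1_shift (a b c : ℝ) : distS1 a (b + c) = distS1 (a - b) c := by
  unfold distS1
  rw [dist_eq_norm, dist_eq_norm, ← QuotientAddGroup.mk_sub, ← QuotientAddGroup.mk_sub,
    sub_sub]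

theorem stmt14
    (T : (Fin 2 → ℝ) → (Fin 2 → ℝ)) (hT : ContDiff ℝ (⊤ : ℕ∞) T)
    (c : (Fin 2 → ℝ) → (Fin 2 → ℝ) → ℝ)
    (hc : ContDiff ℝ (⊤ : ℕ∞) (fun q : (Fin 2 → ℝ) × (Fin 2 → ℝ) => c q.1 q.2))
    (ρ ρbar : (Fin 2 → ℝ) → ℝ)
    (hρ : ContDiff ℝ (⊤ : ℕ∞) ρ) (hρbar : ContDiff ℝ (⊤ : ℕ∞) ρbar)
    (hρpos : ∀ x, 0 < ρ x) (hρbarpos : ∀ x, 0 < ρbar x)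
    -- `T` is a Lie solution: mass balance …
    (hmass : ∀ x, ρbar (T x) * (jacMat T x).det = ρ x)
    -- … and `T` is the `c`-exponential of a closed 1-form `η`
    (hLie : ∃ η : (Fin 2 → ℝ) → Fin 2 → ℝ,
      (∀ m, ContDiff ℝ (⊤ : ℕ∞) (fun x => η x m))
      ∧ (∀ x i j, pd i (fun y => η y j) x = pd j (fun y => η y i) x)
      ∧ (∀ x i, η x i = -(pd i (fun y => c y (T x)) x)))
    -- an arbitrary rotation `θ₀ ∈ S¹`
    (θ₀ : ℝ) :
    -- `F(x,θ) = (T x, θ + θ₀)` is a Lie solution for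
    -- `c̃((x,θ),(x̄,θ̄)) = c(x,x̄) + dist_{S¹}(θ,θ̄)²` and the product densities:
    -- mass balance `(ρ̄∘F) ⋅ det DF = ρ` for the densities `ρ ∧ dθ`, `ρ̄ ∧ dθ̄` …
    (∀ p : (Fin 2 → ℝ) × ℝ,
      ρbar (T p.1) * (jac3 (fun q => (T q.1, q.2 + θ₀)) p).det = ρ p.1)
    ∧
    -- … and `F` is the `c̃`-exponential of a closed 1-form `η̃` on `M² × S¹`
    (∃ ηt : (Fin 2 → ℝ) × ℝ → Fin 3 → ℝ,
      (∀ m, ContDiff ℝ (⊤ : ℕ∞) (fun p => ηt p m))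
      ∧ (∀ p i j, pd3 i (fun q => ηt q j) p = pd3 j (fun q => ηt q i) p)
      ∧ (∀ p i, ηt p i
          = -(pd3 i (fun q => c q.1 (T p.1) + (distS1 q.2 (p.2 + θ₀)) ^ 2) p))) := by
  obtain ⟨η, hηsm, hηcl, hηdef⟩ := hLie
  have hTdiff : Differentiable ℝ T := hT.differentiable (by simp)
  have proj_eq : ∀ (x v : Fin 2 → ℝ) (i : Fin 2),
      fderiv ℝ (fun y => T y i) x v = fderiv ℝ T x v i := by
    intro x v i
    have h2 : HasFDerivAt (fun y => T y i)
        ((ContinuousLinearMap.proj i).comp (fderiv ℝ T x)) x :=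
      ((ContinuousLinearMap.proj (R := ℝ) (φ := fun _ : Fin 2 => ℝ) i).hasFDerivAt).comp x
        (hTdiff x).hasFDerivAt
    rw [h2.fderiv]; rfl
  constructor
  · -- mass balance
    intro p
    have h1 : HasFDerivAt (fun q : (Fin 2 → ℝ) × ℝ => T q.1)
        ((fderiv ℝ T p.1).comp (ContinuousLinearMap.fst ℝ (Fin 2 → ℝ) ℝ)) p :=
      (hTdiff p.1).hasFDerivAt.comp p hasFDerivAt_fst
    have h2 : HasFDerivAt (fun q : (Fin 2 → ℝ) × ℝ => q.2 + θ₀)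
        (ContinuousLinearMap.snd ℝ (Fin 2 → ℝ) ℝ) p := hasFDerivAt_snd.add_const θ₀
    have hF := h1.prodMk h2
    have hval : ∀ v : (Fin 2 → ℝ) × ℝ, fderiv ℝ (fun q : (Fin 2 → ℝ) × ℝ => (T q.1, q.2 + θ₀)) p v
        = (fderiv ℝ T p.1 v.1, v.2) := by
      intro v; rw [hF.fderiv]; rfl
    have hdet : (jac3 (fun q => (T q.1, q.2 + θ₀)) p).det = (jacMat T p.1).det := by
      rw [Matrix.det_fin_three, Matrix.det_fin_two]
      simp [jac3, jacMat, hval, comp3, bvec, proj_eq]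
    rw [hdet]; exact hmass p.1
  · -- Lie structure
    set h : ℝ → ℝ := fun s => distS1 s θ₀ ^ 2 with hh_def
    have hrw : ∀ p : (Fin 2 → ℝ) × ℝ,
        (fun q : (Fin 2 → ℝ) × ℝ => c q.1 (T p.1) + (distS1 q.2 (p.2 + θ₀)) ^ 2)
        = (fun q : (Fin 2 → ℝ) × ℝ => c q.1 (T p.1) + h (q.2 - p.2)) := by
      intro p; funext q; rw [distS1_shift]
    have hcb : ∀ b, ContDiff ℝ (⊤ : ℕ∞) (fun x => c x b) :=
      fun b => hc.comp (contDiff_id.prodMk contDiff_const)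
    by_cases hdiff : DifferentiableAt ℝ h 0
    · -- smooth case
      set k : ℝ := deriv h 0 with hk_def
      have hfder : ∀ p : (Fin 2 → ℝ) × ℝ,
          HasFDerivAt (fun q : (Fin 2 → ℝ) × ℝ => c q.1 (T p.1) + h (q.2 - p.2))
            (((fderiv ℝ (fun x => c x (T p.1)) p.1).comp (ContinuousLinearMap.fst ℝ (Fin 2 → ℝ) ℝ))
              + k • (ContinuousLinearMap.snd ℝ (Fin 2 → ℝ) ℝ)) p := by
        intro p
        have hc1 : HasFDerivAt (fun q : (Fin 2 → ℝ) × ℝ => c q.1 (T p.1))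
            ((fderiv ℝ (fun x => c x (T p.1)) p.1).comp (ContinuousLinearMap.fst ℝ (Fin 2 → ℝ) ℝ)) p :=
          (((hcb (T p.1)).differentiable (by simp) p.1).hasFDerivAt).comp p hasFDerivAt_fst
        have hg : HasFDerivAt (fun q : (Fin 2 → ℝ) × ℝ => q.2 - p.2)
            (ContinuousLinearMap.snd ℝ (Fin 2 → ℝ) ℝ) p := hasFDerivAt_snd.sub_const p.2
        have hhd : HasDerivAt h k ((fun q : (Fin 2 → ℝ) × ℝ => q.2 - p.2) p) := by
          show HasDerivAt h k (p.2 - p.2)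
          rw [sub_self]
          exact hdiff.hasDerivAt
        exact hc1.add (by have := hhd.comp_hasFDerivAt p hg; exact this)
      have key : ∀ (p : (Fin 2 → ℝ) × ℝ) (i : Fin 3),
          (![η p.1 0, η p.1 1, -k] : Fin 3 → ℝ) i
          = -(pd3 i (fun q => c q.1 (T p.1) + (distS1 q.2 (p.2 + θ₀)) ^ 2) p) := by
        intro p i
        unfold pd3
        rw [hrw p, (hfder p).fderiv]
        fin_cases i <;>
          simp [bvec, ContinuousLinearMap.comp_apply, pd] <;>
          rw [hηdef p.1] <;> rfl
      refine ⟨fun p => ![η p.1 0, η p.1 1, -k], ?_, ?_, fun p i => key p i⟩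
      · intro m
        fin_cases m
        · simpa [Function.comp_def] using (hηsm 0).comp contDiff_fst
        · simpa [Function.comp_def] using (hηsm 1).comp contDiff_fst
        · simpa using contDiff_const (c := -k)
      · intro p i j
        have hηfst : ∀ m : Fin 2, HasFDerivAt (fun q : (Fin 2 → ℝ) × ℝ => η q.1 m)
            ((fderiv ℝ (fun x => η x m) p.1).comp (ContinuousLinearMap.fst ℝ (Fin 2 → ℝ) ℝ)) p :=
          fun m => (((hηsm m).differentiable (by simp) p.1).hasFDerivAt).comp p hasFDerivAt_fst
        have hpd : ∀ (m : Fin 2) (i : Fin 3),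
            pd3 i (fun q => η q.1 m) p = fderiv ℝ (fun x => η x m) p.1 (bvec i).1 := by
          intro m i; unfold pd3; rw [(hηfst m).fderiv]; rfl
        have hconst : ∀ i : Fin 3, pd3 i (fun _ : (Fin 2 → ℝ) × ℝ => -k) p = 0 := by
          intro i; unfold pd3; simp
        have hb0 : (bvec 0).1 = ee 0 := by simp [bvec]
        have hb1 : (bvec 1).1 = ee 1 := by simp [bvec]
        have hb2 : (bvec 2).1 = (0 : Fin 2 → ℝ) := by simp [bvec]
        have hzero : ∀ m : Fin 2, pd3 2 (fun q => η q.1 m) p = 0 := by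
          intro m; rw [hpd, hb2, map_zero]
        have hηcl' : ∀ (i j : Fin 2),
            fderiv ℝ (fun x => η x j) p.1 (ee i) = fderiv ℝ (fun x => η x i) p.1 (ee j) :=
          fun i j => hηcl p.1 i j
        fin_cases i <;> fin_cases j <;>
          simp only [Fin.zero_eta, Fin.mk_one, Fin.reduceFinMk, Fin.isValue,
            Matrix.cons_val_zero, Matrix.cons_val_one, Matrix.head_cons,
            Matrix.cons_val_two, Matrix.tail_cons, Matrix.cons_val_fin_one] <;>
          first
            | rfl
            | (rw [hpd, hpd, hb0, hb1]; exact hηcl' _ _)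
            | (rw [hpd, hpd, hb1, hb0]; exact hηcl' _ _)
            | (rw [hconst, hzero])
            | (rw [hzero, hconst])
    · -- non-smooth case: the c̃ potential is nowhere differentiable in θ, junk fderiv = 0
      refine ⟨fun _ _ => 0, fun m => contDiff_const, ?_, ?_⟩
      · intro p i j; simp [pd3]
      · intro p i
        have hnd : ¬ DifferentiableAt ℝ
            (fun q : (Fin 2 → ℝ) × ℝ => c q.1 (T p.1) + h (q.2 - p.2)) p := by
          intro H
          apply hdiff
          have hι : DifferentiableAt ℝ (fun t : ℝ => ((p.1, t + p.2) : (Fin 2 → ℝ) × ℝ)) 0 :=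
            (differentiableAt_const _).prodMk ((differentiableAt_id).add_const p.2)
          have H' : DifferentiableAt ℝ
              (fun q : (Fin 2 → ℝ) × ℝ => c q.1 (T p.1) + h (q.2 - p.2))
              ((p.1, (0:ℝ) + p.2) : (Fin 2 → ℝ) × ℝ) := by
            simpa using H
          have H2 := DifferentiableAt.comp (0:ℝ) H' hι
          have H3 : DifferentiableAt ℝ (fun t : ℝ => c p.1 (T p.1) + h t) 0 := by
            have he : ((fun q : (Fin 2 → ℝ) × ℝ => c q.1 (T p.1) + h (q.2 - p.2))
                ∘ (fun t : ℝ => ((p.1, t + p.2) : (Fin 2 → ℝ) × ℝ)))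
                = fun t : ℝ => c p.1 (T p.1) + h t := by
              funext t; simp
            rwa [he] at H2
          have := H3.sub (differentiableAt_const (c p.1 (T p.1)))
          simpa using this
        unfold pd3
        rw [hrw p, fderiv_zero_of_not_differentiableAt hnd]
        simp

end
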